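/- Let H be a quasi-Hopf algebra with invertible antipode. The category of type I left-right anti-Yetter–Drinfeld modules (pairs (M, ρ) satisfying the module-compatibility, quasi-comodule, and counit conditions, with morphisms H-module maps f satisfying ρ'∘f = (f⊗id)∘ρ) is equivalent to the weak center w-Z_{H-Mod}(^#_H M) of the bimodule category ^#_H M. -/

import Mathlib

open TensorProduct

noncomputable section

/-- A quasi-bialgebra over a field `k`. -/
structure QuasiBialgebra (k H : Type) [Field k] [Ring H] [Algebra k H] where
  comul : H →ₐ[k] H ⊗[k] H
  counit : H →ₐ[k] k
  assocEl : (H ⊗[k] (H ⊗[k] H))ˣ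
  counit_left : ∀ a : H,
    (Algebra.TensorProduct.lid k H)
      ((Algebra.TensorProduct.map counit (AlgHom.id k H)) (comul a)) = a
  counit_right : ∀ a : H,
    (Algebra.TensorProduct.rid k k H)
      ((Algebra.TensorProduct.map (AlgHom.id k H) counit) (comul a)) = a
  quasi_coassoc : ∀ a : H,
    (Algebra.TensorProduct.map (AlgHom.id k H) comul) (comul a)
      = (assocEl : H ⊗[k] (H ⊗[k] H))
        * (Algebra.TensorProduct.assoc k k k H H H)
            ((Algebra.TensorProduct.map comul (AlgHom.id k H)) (comul a))
        * ((assocEl⁻¹ : (H ⊗[k] (H ⊗[k] H))ˣ) : H ⊗[k] (H ⊗[k] H))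
  counit_mid_assocEl :
    (Algebra.TensorProduct.map (AlgHom.id k H)
      (((Algebra.TensorProduct.lid k H).toAlgHom).comp
        (Algebra.TensorProduct.map counit (AlgHom.id k H))))
      (assocEl : H ⊗[k] (H ⊗[k] H)) = 1
  pentagon :
    (Algebra.TensorProduct.map (AlgHom.id k H)
       (Algebra.TensorProduct.map (AlgHom.id k H) comul))
      (assocEl : H ⊗[k] (H ⊗[k] H))
    * (Algebra.TensorProduct.assoc k k k H H (H ⊗[k] H))
        ((Algebra.TensorProduct.map comul (AlgHom.id k (H ⊗[k] H)))
          (assocEl : H ⊗[k] (H ⊗[k] H)))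
    = (Algebra.TensorProduct.includeRight (R := k) (A := H)
        (assocEl : H ⊗[k] (H ⊗[k] H)))
      * (Algebra.TensorProduct.map (AlgHom.id k H)
           (Algebra.TensorProduct.assoc k k k H H H).toAlgHom)
          ((Algebra.TensorProduct.map (AlgHom.id k H)
             (Algebra.TensorProduct.map comul (AlgHom.id k H)))
            (assocEl : H ⊗[k] (H ⊗[k] H)))
      * (Algebra.TensorProduct.map (AlgHom.id k H)
           (Algebra.TensorProduct.assoc k k k H H H).toAlgHom)
          ((Algebra.TensorProduct.assoc k k k H (H ⊗[k] H) H)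
            ((Algebra.TensorProduct.includeLeft (R := k) (S := k))
              (assocEl : H ⊗[k] (H ⊗[k] H))))

/-- A quasi-Hopf algebra over a field `k`, with invertible antipode. -/
structure QuasiHopf (k H : Type) [Field k] [Ring H] [Algebra k H]
    extends QuasiBialgebra k H where
  S : H →ₗ[k] H
  S_one : S 1 = 1
  S_mul : ∀ a b : H, S (a * b) = S b * S a
  S_bij : Function.Bijective S
  alpha : H
  beta : H
  antipode_left : ∀ h : H,
    ((LinearMap.mul' k H).comp
      (TensorProduct.map ((LinearMap.mulRight k alpha).comp S) LinearMap.id))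
      (comul h) = counit h • alpha
  antipode_right : ∀ h : H,
    ((LinearMap.mul' k H).comp
      (TensorProduct.map LinearMap.id ((LinearMap.mulLeft k beta).comp S)))
      (comul h) = counit h • beta
  phi_antipode :
    ((LinearMap.mul' k H).comp ((LinearMap.mul' k H).lTensor H))
      ((TensorProduct.map LinearMap.id
        (TensorProduct.map ((LinearMap.mulLeft k beta).comp S)
          (LinearMap.mulLeft k alpha)))
        (assocEl : H ⊗[k] (H ⊗[k] H))) = 1
  phiInv_antipode :
    ((LinearMap.mul' k H).comp ((LinearMap.mul' k H).lTensor H))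
      ((TensorProduct.map S
        (TensorProduct.map (LinearMap.mulLeft k alpha)
          (LinearMap.mulLeft k beta)))
        (((assocEl⁻¹ : (H ⊗[k] (H ⊗[k] H))ˣ) : H ⊗[k] (H ⊗[k] H)))) = 1

variable {k H : Type} [Field k] [Ring H] [Algebra k H]

/-- The diagonal action map of `H` on the tensor product of two `H`-modules
(given by representations into `Module.End`): `h · (m ⊗ n) = h¹ m ⊗ h² n`.
A priori this is only a linear map into the endomorphisms. -/
def QuasiBialgebra.tAct (Q : QuasiBialgebra k H) {M N : Type}
    [AddCommGroup M] [Module k M] [AddCommGroup N] [Module k N]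
    (f : H →ₗ[k] Module.End k M) (g : H →ₗ[k] Module.End k N) :
    H →ₗ[k] Module.End k (M ⊗[k] N) :=
  (TensorProduct.homTensorHomMap (RingHom.id k) M N M N).comp
    ((TensorProduct.map f g).comp Q.comul.toLinearMap)

/-- The componentwise action of an element of `H ⊗ (H ⊗ H)` on `M ⊗ (N ⊗ L)`. -/
def actTriple {M N L : Type}
    [AddCommGroup M] [Module k M] [AddCommGroup N] [Module k N]
    [AddCommGroup L] [Module k L]
    (f : H →ₗ[k] Module.End k M) (g : H →ₗ[k] Module.End k N)
    (e : H →ₗ[k] Module.End k L) :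
    H ⊗[k] (H ⊗[k] H) →ₗ[k] Module.End k (M ⊗[k] (N ⊗[k] L)) :=
  (TensorProduct.homTensorHomMap (RingHom.id k) M (N ⊗[k] L) M (N ⊗[k] L)).comp
    (TensorProduct.map f
      ((TensorProduct.homTensorHomMap (RingHom.id k) N L N L).comp
        (TensorProduct.map g e)))

/-- The trivial representation of `H` on `k`, via the counit. -/
def QuasiBialgebra.trivRep (Q : QuasiBialgebra k H) :
    H →ₐ[k] Module.End k k :=
  (Algebra.lmul k k).comp Q.counit

/-- Equivariance of a linear map with respect to two (linear) actions of `H`. -/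
def LinEquivariant {k H : Type} [Field k] [Ring H] [Algebra k H]
    {V W : Type} [AddCommGroup V] [Module k V] [AddCommGroup W] [Module k W]
    (ρV : H →ₗ[k] Module.End k V) (ρW : H →ₗ[k] Module.End k W)
    (f : V →ₗ[k] W) : Prop :=
  ∀ (h : H) (v : V), f (ρV h v) = ρW h (f v)

/-- The left internal Hom action of `H` on `Hom_k(M,N)`:
`(h · φ)(m) = h¹ φ(S(h²) m)`. -/
def QuasiHopf.homLAct (Qh : QuasiHopf k H) {M N : Type}
    [AddCommGroup M] [Module k M] [AddCommGroup N] [Module k N]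
    (ρM : H →ₐ[k] Module.End k M) (ρN : H →ₐ[k] Module.End k N) :
    H →ₗ[k] Module.End k (M →ₗ[k] N) :=
  (TensorProduct.lift
    (LinearMap.mk₂ k
      (fun a b => (LinearMap.llcomp k M N N (ρN a)).comp
          (LinearMap.lcomp k N (ρM (Qh.S b))))
      (fun a a' b => by ext φ m; simp [map_add]
      )
      (fun c a b => by ext φ m; simp [map_smul]
      )
      (fun a b b' => by ext φ m; simp [map_add]
      )
      (fun c a b => by ext φ m; simp [map_smul]
      ))).comp Qh.comul.toLinearMap

/-- The right internal Hom action of `H` on `Hom_k(M,N)`: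
`(h · φ)(m) = h² φ(S⁻¹(h¹) m)`, where `Sinv` is the inverse of the antipode. -/
def QuasiHopf.homRAct (Qh : QuasiHopf k H) (Sinv : H →ₗ[k] H) {M N : Type}
    [AddCommGroup M] [Module k M] [AddCommGroup N] [Module k N]
    (ρM : H →ₐ[k] Module.End k M) (ρN : H →ₐ[k] Module.End k N) :
    H →ₗ[k] Module.End k (M →ₗ[k] N) :=
  (TensorProduct.lift
    (LinearMap.mk₂ k
      (fun a b => (LinearMap.llcomp k M N N (ρN b)).comp
          (LinearMap.lcomp k N (ρM (Sinv a))))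
      (fun a a' b => by ext φ m; simp [map_add]
      )
      (fun c a b => by ext φ m; simp [map_smul]
      )
      (fun a b b' => by ext φ m; simp [map_add]
      )
      (fun c a b => by ext φ m; simp [map_smul]
      ))).comp Qh.comul.toLinearMap

/-- `S²` as an algebra endomorphism of a quasi-Hopf algebra. -/
def QuasiHopf.S2 (Qh : QuasiHopf k H) : H →ₐ[k] H where
  toFun h := Qh.S (Qh.S h)
  map_one' := by simp [Qh.S_one]
  map_mul' a b := by simp [Qh.S_mul]
  map_zero' := by simp
  map_add' a b := by simp
  commutes' c := by
    simp [Algebra.algebraMap_eq_smul_one, map_smul, Qh.S_one]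

/-- The `#`-twist of a module: the same underlying space, with the action
`h · v = S²(h) v`. -/
def QuasiHopf.hashRep (Qh : QuasiHopf k H) {V : Type}
    [AddCommGroup V] [Module k V]
    (ρV : H →ₐ[k] Module.End k V) : H →ₐ[k] Module.End k V :=
  ρV.comp Qh.S2

open Finset in
/-- The type-I anti-Yetter–Drinfeld compatibility condition
`h¹ m⟨0⟩ ⊗ h² m⟨1⟩ = (h² m)⟨0⟩ ⊗ (h² m)⟨1⟩ S²(h¹)`, expressed using arbitrary
finite decompositions of the coproduct. -/
def QuasiHopf.CompatI (Qh : QuasiHopf k H) {M : Type}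
    [AddCommGroup M] [Module k M]
    (ρM : H →ₐ[k] Module.End k M) (coact : M →ₗ[k] M ⊗[k] H) : Prop :=
  ∀ (h : H) (m : M) (ι : Type) (s : Finset ι) (h1 h2 : ι → H),
    Qh.comul h = ∑ i ∈ s, h1 i ⊗ₜ[k] h2 i →
    ∑ i ∈ s, (TensorProduct.map (ρM (h1 i)) (LinearMap.mulLeft k (h2 i)))
        (coact m)
      = ∑ i ∈ s,
          (LinearMap.lTensor M
            (LinearMap.mulRight k (Qh.S (Qh.S (h1 i)))))
            (coact (ρM (h2 i) m))

/-- The family of maps `τ_V : V^# ⊗ M → M ⊗ V`, `v ⊗ m ↦ m⟨0⟩ ⊗ m⟨1⟩ v`,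
associated to a coaction `ρ : M → M ⊗ H`. -/
def QuasiHopf.tauOfCoact (Qh : QuasiHopf k H) {M : Type}
    [AddCommGroup M] [Module k M] (coact : M →ₗ[k] M ⊗[k] H)
    (V : Type) [AddCommGroup V] [Module k V]
    (ρV : H →ₐ[k] Module.End k V) : V ⊗[k] M →ₗ[k] M ⊗[k] V :=
  TensorProduct.lift
    (LinearMap.mk₂ k
      (fun v m =>
        (LinearMap.lTensor M ((ρV.toLinearMap :
            H →ₗ[k] V →ₗ[k] V).flip v)) (coact m))
      (fun v v' m => by
        simp [map_add, LinearMap.lTensor_add, LinearMap.add_apply])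
      (fun c v m => by
        simp [map_smul, LinearMap.lTensor_smul, LinearMap.smul_apply])
      (fun v m m' => by simp [map_add])
      (fun c v m => by simp [map_smul]))

/-- The coaction `m ↦ τ_H(1 ⊗ m)` associated to a centralizing family `τ`. -/
def QuasiHopf.coactOfTau (Qh : QuasiHopf k H) {M : Type}
    [AddCommGroup M] [Module k M]
    (τ : ∀ (V : Type) [AddCommGroup V] [Module k V],
      (H →ₐ[k] Module.End k V) → (V ⊗[k] M →ₗ[k] M ⊗[k] V)) :
    M →ₗ[k] M ⊗[k] H :=
  (τ H (Algebra.lmul k H)).comp ((TensorProduct.mk k H M) 1)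

/-- A family `τ_V : V ▷ M → M ◁ V` (with `V ▷ M = V^# ⊗ M`, `M ◁ V = M ⊗ V`)
is a natural transformation: each component is `H`-equivariant, and the family
is natural in `V`. -/
def QuasiHopf.IsCentralFam (Qh : QuasiHopf k H) {M : Type}
    [AddCommGroup M] [Module k M] (ρM : H →ₐ[k] Module.End k M)
    (τ : ∀ (V : Type) [AddCommGroup V] [Module k V],
      (H →ₐ[k] Module.End k V) → (V ⊗[k] M →ₗ[k] M ⊗[k] V)) : Prop :=
  (∀ (V : Type) [AddCommGroup V] [Module k V]
      (ρV : H →ₐ[k] Module.End k V),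
    LinEquivariant (Qh.tAct (Qh.hashRep ρV).toLinearMap ρM.toLinearMap)
      (Qh.tAct ρM.toLinearMap ρV.toLinearMap) (τ V ρV)) ∧
  (∀ (V : Type) [AddCommGroup V] [Module k V]
      (ρV : H →ₐ[k] Module.End k V)
      (W : Type) [AddCommGroup W] [Module k W]
      (ρW : H →ₐ[k] Module.End k W)
      (f : V →ₗ[k] W),
    LinEquivariant ρV.toLinearMap ρW.toLinearMap f →
    (τ W ρW).comp (LinearMap.rTensor M f)
      = (LinearMap.lTensor M f).comp (τ V ρV))

/-- The componentwise action of an element of `H ⊗ H` on `M ⊗ H`, where the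
second factor acts by left multiplication. -/
def QuasiHopf.diagActMH (Qh : QuasiHopf k H) {M : Type}
    [AddCommGroup M] [Module k M] (ρM : H →ₐ[k] Module.End k M) :
    H ⊗[k] H →ₗ[k] Module.End k (M ⊗[k] H) :=
  (TensorProduct.homTensorHomMap (RingHom.id k) M H M H).comp
    (TensorProduct.map ρM.toLinearMap (LinearMap.mul k H))

/-- The action of `H` on `M ⊗^r H`:
`x · (m ⊗ h) = x²¹ m ⊗ x²² h S(x¹)`. -/
def QuasiHopf.rTensorHopfAct (Qh : QuasiHopf k H) {M : Type}
    [AddCommGroup M] [Module k M] (ρM : H →ₐ[k] Module.End k M) :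
    H →ₗ[k] Module.End k (M ⊗[k] H) :=
  (TensorProduct.lift
    (LinearMap.mk₂ k
      (fun a b =>
        (Qh.diagActMH ρM (Qh.comul b)).comp
          (LinearMap.lTensor M (LinearMap.mulRight k (Qh.S a))))
      (fun a a' b => by
        ext m x
        simp [map_add, mul_add, TensorProduct.tmul_add])
      (fun c a b => by
        ext m x
        simp [map_smul, TensorProduct.tmul_smul])
      (fun a b b' => by
        simp [map_add, LinearMap.add_comp])
      (fun c a b => by
        simp [map_smul, LinearMap.smul_comp]))).comp Qh.comul.toLinearMap

open Finset in
/-- The type-II anti-Yetter–Drinfeld compatibility condition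
`(h m)[0] ⊗ (h m)[1] = h²¹ m[0] ⊗ h²² m[1] S(h¹)`, expressed using arbitrary
finite decompositions of the coproduct. -/
def QuasiHopf.CompatII (Qh : QuasiHopf k H) {M : Type}
    [AddCommGroup M] [Module k M]
    (ρM : H →ₐ[k] Module.End k M) (coact : M →ₗ[k] M ⊗[k] H) : Prop :=
  ∀ (h : H) (m : M) (ι : Type) (s : Finset ι) (h1 h2 : ι → H),
    Qh.comul h = ∑ i ∈ s, h1 i ⊗ₜ[k] h2 i →
    coact (ρM h m)
      = ∑ i ∈ s,
          (Qh.diagActMH ρM (Qh.comul (h2 i)))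
            ((LinearMap.lTensor M (LinearMap.mulRight k (Qh.S (h1 i))))
              (coact m))

open Finset in
/-- The type-I quasi-comodule condition (the hexagon identity in coordinates):
`(Q m⟨0⟩)⟨0⟩ ⊗ (Q m⟨0⟩)⟨1⟩ S²(P) ⊗ R m⟨1⟩
  = P (R' m)⟨0⟩ ⊗ Q ((R' m)⟨1⟩)¹ S²(P') ⊗ R ((R' m)⟨1⟩)² S²(Q')`,
with two implicit copies `P ⊗ Q ⊗ R` and `P' ⊗ Q' ⊗ R'` of `Φ⁻¹`. -/
def QuasiHopf.QuasiComodI (Qh : QuasiHopf k H) {M : Type}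
    [AddCommGroup M] [Module k M]
    (ρM : H →ₐ[k] Module.End k M) (coact : M →ₗ[k] M ⊗[k] H) : Prop :=
  ∀ (m : M) (ι : Type) (s : Finset ι) (P Q R : ι → H),
    ((Qh.assocEl⁻¹ : (H ⊗[k] (H ⊗[k] H))ˣ) : H ⊗[k] (H ⊗[k] H))
        = ∑ i ∈ s, P i ⊗ₜ[k] (Q i ⊗ₜ[k] R i) →
    ∑ i ∈ s,
      (TensorProduct.assoc k M H H)
        ((TensorProduct.map
          (((LinearMap.lTensor M
              (LinearMap.mulRight k (Qh.S (Qh.S (P i))))).comp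
            (coact.comp (ρM (Q i) : M →ₗ[k] M))))
          (LinearMap.mulLeft k (R i))) (coact m))
      = ∑ i ∈ s, ∑ j ∈ s,
          (TensorProduct.map (ρM (P i) : M →ₗ[k] M)
            (TensorProduct.map
              ((LinearMap.mulLeft k (Q i)).comp
                (LinearMap.mulRight k (Qh.S (Qh.S (P j)))))
              ((LinearMap.mulLeft k (R i)).comp
                (LinearMap.mulRight k (Qh.S (Qh.S (Q j)))))))
            ((LinearMap.lTensor M Qh.comul.toLinearMap)
              (coact (ρM (R j) m)))

/-- The counit condition `m = ε(m⟨1⟩) m⟨0⟩` on a coaction. -/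
def QuasiHopf.CounitI (Qh : QuasiHopf k H) {M : Type}
    [AddCommGroup M] [Module k M] (coact : M →ₗ[k] M ⊗[k] H) : Prop :=
  ∀ m : M,
    (TensorProduct.rid k M)
      ((LinearMap.lTensor M Qh.counit.toLinearMap) (coact m)) = m

/-- The tensor product representation of `H` on `M ⊗ N`
(for a quasi-bialgebra this is an algebra homomorphism). -/
def QuasiBialgebra.tRep (Q : QuasiBialgebra k H) {M N : Type}
    [AddCommGroup M] [Module k M] [AddCommGroup N] [Module k N]
    (ρM : H →ₐ[k] Module.End k M) (ρN : H →ₐ[k] Module.End k N) :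
    H →ₐ[k] Module.End k (M ⊗[k] N) :=
  (Module.endTensorEndAlgHom (R := k) (S := k) (A := k)
    (M := M) (N := N)).comp
    ((Algebra.TensorProduct.map ρM ρN).comp Q.comul)

open Finset in
/-- The hexagon axiom for a centralizing family `τ` on the bimodule category
`^#_H M`, expressed in coordinates with `Φ⁻¹ = P ⊗ Q ⊗ R`. -/
def QuasiHopf.HexagonFam (Qh : QuasiHopf k H) {M : Type}
    [AddCommGroup M] [Module k M] (ρM : H →ₐ[k] Module.End k M)
    (τ : ∀ (V : Type) [AddCommGroup V] [Module k V],
      (H →ₐ[k] Module.End k V) → (V ⊗[k] M →ₗ[k] M ⊗[k] V)) : Prop :=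
  ∀ (V : Type) [AddCommGroup V] [Module k V]
    (ρV : H →ₐ[k] Module.End k V)
    (W : Type) [AddCommGroup W] [Module k W]
    (ρW : H →ₐ[k] Module.End k W)
    (ι : Type) (s : Finset ι) (P Q R : ι → H),
    ((Qh.assocEl⁻¹ : (H ⊗[k] (H ⊗[k] H))ˣ) : H ⊗[k] (H ⊗[k] H))
        = ∑ i ∈ s, P i ⊗ₜ[k] (Q i ⊗ₜ[k] R i) →
    (LinearMap.rTensor W (τ V ρV)).comp
      ((∑ i ∈ s,
        (TensorProduct.map
          (TensorProduct.map
            ((Qh.hashRep ρV) (P i) : V →ₗ[k] V) (ρM (Q i) : M →ₗ[k] M))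
          (ρW (R i) : W →ₗ[k] W)).comp
          (TensorProduct.assoc k V M W).symm.toLinearMap).comp
        (LinearMap.lTensor V (τ W ρW)))
    = ((∑ i ∈ s,
        (TensorProduct.map
          (TensorProduct.map
            (ρM (P i) : M →ₗ[k] M) (ρV (Q i) : V →ₗ[k] V))
          (ρW (R i) : W →ₗ[k] W)).comp
          (TensorProduct.assoc k M V W).symm.toLinearMap).comp
        (τ (V ⊗[k] W) (Qh.tRep ρV ρW))).comp
      (∑ i ∈ s,
        (TensorProduct.map
          (TensorProduct.map
            ((Qh.hashRep ρV) (P i) : V →ₗ[k] V)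
            ((Qh.hashRep ρW) (Q i) : W →ₗ[k] W))
          (ρM (R i) : M →ₗ[k] M)).comp
          (TensorProduct.assoc k V W M).symm.toLinearMap)

/-- The unit condition `τ_k = Id` for a centralizing family. -/
def QuasiHopf.UnitFam (Qh : QuasiHopf k H) {M : Type}
    [AddCommGroup M] [Module k M]
    (τ : ∀ (V : Type) [AddCommGroup V] [Module k V],
      (H →ₐ[k] Module.End k V) → (V ⊗[k] M →ₗ[k] M ⊗[k] V)) : Prop :=
  ∀ m : M, τ k Qh.trivRep ((1 : k) ⊗ₜ[k] m) = m ⊗ₜ[k] (1 : k)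

/-!
A centralizing family `τ` is determined by the coaction `m ↦ τ_H(1 ⊗ m)`: for `v ∈ V` the orbit
map `h ↦ h v` is an `H`-linear map `H → V`, so naturality forces `τ_V(v ⊗ m) = m⟨0⟩ ⊗ m⟨1⟩ v`.
Along this dictionary the axioms match one by one: `H`-linearity of `τ_H` at `1 ⊗ m` is the
module-compatibility condition, the hexagon at `V = W = H` evaluated at `1 ⊗ 1 ⊗ m` is the
quasi-comodule condition, and `τ_k = Id` is the counit condition; conversely each
condition, pushed forward along the orbit maps of `v` and `w`, gives back the axiom for arbitrary
`V` and `W`. Testing against `V = H` and `v = 1` in the same way shows that a module map commutes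
with the coactions iff it commutes with the families `τ`.
-/

section OrbitMap

variable {V : Type} [AddCommGroup V] [Module k V] (ρV : H →ₐ[k] Module.End k V)

lemma AlgHom.toLinearMap_flip_comp_mulRight (v : V) (a : H) :
    (ρV.toLinearMap.flip v).comp (LinearMap.mulRight k a) = ρV.toLinearMap.flip (ρV a v) := by
  ext h
  simp [map_mul, Module.End.mul_apply]

lemma AlgHom.toLinearMap_flip_comp_mulLeft (v : V) (a : H) :
    (ρV.toLinearMap.flip v).comp (LinearMap.mulLeft k a)
      = (ρV a : V →ₗ[k] V).comp (ρV.toLinearMap.flip v) := by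
  ext h
  simp [map_mul, Module.End.mul_apply]

lemma AlgHom.linEquivariant_toLinearMap_flip (v : V) :
    LinEquivariant (Algebra.lmul k H).toLinearMap ρV.toLinearMap (ρV.toLinearMap.flip v) := by
  intro h h'
  simp [map_mul, Module.End.mul_apply]

end OrbitMap

lemma Algebra.lmul_toLinearMap_flip (a : H) :
    ((Algebra.lmul k H).toLinearMap : H →ₗ[k] Module.End k H).flip a
      = LinearMap.mulRight k a := by
  ext h
  simp

lemma QuasiBialgebra.trivRep_toLinearMap_flip_one (Q : QuasiBialgebra k H) :
    (Q.trivRep.toLinearMap : H →ₗ[k] Module.End k k).flip 1 = Q.counit.toLinearMap := by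
  ext h
  simp [QuasiBialgebra.trivRep]

lemma QuasiBialgebra.tAct_eq_sum (Q : QuasiBialgebra k H) {N L : Type}
    [AddCommGroup N] [Module k N] [AddCommGroup L] [Module k L]
    (f : H →ₗ[k] Module.End k N) (g : H →ₗ[k] Module.End k L)
    {h : H} {ι : Type} {s : Finset ι} {h1 h2 : ι → H}
    (hd : Q.comul h = ∑ i ∈ s, h1 i ⊗ₜ[k] h2 i) :
    Q.tAct f g h = ∑ i ∈ s, TensorProduct.map (f (h1 i)) (g (h2 i)) := by
  simp [QuasiBialgebra.tAct, hd, map_sum]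

lemma QuasiBialgebra.tRep_apply (Q : QuasiBialgebra k H) {V W : Type}
    [AddCommGroup V] [Module k V] [AddCommGroup W] [Module k W]
    (ρV : H →ₐ[k] Module.End k V) (ρW : H →ₐ[k] Module.End k W) (c : H) :
    Q.tRep ρV ρW c
      = ((Module.endTensorEndAlgHom (R := k) (S := k) (A := k) (M := V) (N := W)).toLinearMap.comp
          (Algebra.TensorProduct.map ρV ρW).toLinearMap) (Q.comul c) := rfl

namespace QuasiHopf

variable (Qh : QuasiHopf k H) {M : Type} [AddCommGroup M] [Module k M]
  (ρM : H →ₐ[k] Module.End k M) (coact : M →ₗ[k] M ⊗[k] H)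

lemma hashRep_apply {V : Type} [AddCommGroup V] [Module k V]
    (ρV : H →ₐ[k] Module.End k V) (a : H) :
    Qh.hashRep ρV a = ρV (Qh.S (Qh.S a)) := rfl

lemma tauOfCoact_tmul {V : Type} [AddCommGroup V] [Module k V]
    (ρV : H →ₐ[k] Module.End k V) (v : V) (m : M) :
    Qh.tauOfCoact coact V ρV (v ⊗ₜ[k] m)
      = LinearMap.lTensor M (ρV.toLinearMap.flip v) (coact m) :=
  rfl

lemma tauOfCoact_lmul_one_tmul (m : M) :
    Qh.tauOfCoact coact H (Algebra.lmul k H) ((1 : H) ⊗ₜ[k] m) = coact m := by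
  rw [tauOfCoact_tmul, Algebra.lmul_toLinearMap_flip, LinearMap.mulRight_one,
    LinearMap.lTensor_id, LinearMap.id_apply]

lemma coactOfTau_tauOfCoact :
    Qh.coactOfTau (fun V _ _ ρV => Qh.tauOfCoact coact V ρV) = coact :=
  LinearMap.ext (Qh.tauOfCoact_lmul_one_tmul coact)

lemma eq_tauOfCoact_coactOfTau
    (τ : ∀ (V : Type) [AddCommGroup V] [Module k V],
      (H →ₐ[k] Module.End k V) → (V ⊗[k] M →ₗ[k] M ⊗[k] V))
    (hτ : ∀ (V : Type) [AddCommGroup V] [Module k V] (ρV : H →ₐ[k] Module.End k V)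
      (W : Type) [AddCommGroup W] [Module k W] (ρW : H →ₐ[k] Module.End k W)
      (f : V →ₗ[k] W),
      LinEquivariant ρV.toLinearMap ρW.toLinearMap f →
      (τ W ρW).comp (LinearMap.rTensor M f) = (LinearMap.lTensor M f).comp (τ V ρV))
    (V : Type) [AddCommGroup V] [Module k V] (ρV : H →ₐ[k] Module.End k V) :
    τ V ρV = Qh.tauOfCoact (Qh.coactOfTau τ) V ρV := by
  refine TensorProduct.ext' fun v m => ?_
  have := LinearMap.congr_fun (hτ H (Algebra.lmul k H) V ρV _
    (ρV.linEquivariant_toLinearMap_flip v)) ((1 : H) ⊗ₜ[k] m)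
  simp only [LinearMap.comp_apply, LinearMap.rTensor_tmul, LinearMap.flip_apply,
    AlgHom.toLinearMap_apply, map_one, Module.End.one_apply] at this
  exact this

lemma tauOfCoact_comp_rTensor
    {V : Type} [AddCommGroup V] [Module k V] (ρV : H →ₐ[k] Module.End k V)
    {W : Type} [AddCommGroup W] [Module k W] (ρW : H →ₐ[k] Module.End k W) {f : V →ₗ[k] W}
    (hf : LinEquivariant ρV.toLinearMap ρW.toLinearMap f) :
    (Qh.tauOfCoact coact W ρW).comp (LinearMap.rTensor M f)
      = (LinearMap.lTensor M f).comp (Qh.tauOfCoact coact V ρV) := by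
  refine TensorProduct.ext' fun v m => ?_
  have hflip : ρW.toLinearMap.flip (f v) = f.comp (ρV.toLinearMap.flip v) := by
    ext h
    exact (hf h v).symm
  simp only [LinearMap.comp_apply, LinearMap.rTensor_tmul, tauOfCoact_tmul, hflip,
    LinearMap.lTensor_comp]

lemma coact_comp_eq_iff_tauOfCoact_comp_eq {M' : Type} [AddCommGroup M'] [Module k M']
    (coact' : M' →ₗ[k] M' ⊗[k] H) (f : M →ₗ[k] M') :
    coact'.comp f = (LinearMap.rTensor H f).comp coact ↔
      ∀ (V : Type) [AddCommGroup V] [Module k V] (ρV : H →ₐ[k] Module.End k V),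
        (Qh.tauOfCoact coact' V ρV).comp (LinearMap.lTensor V f)
          = (LinearMap.rTensor V f).comp (Qh.tauOfCoact coact V ρV) := by
  constructor
  · intro hc V _ _ ρV
    refine TensorProduct.ext' fun v m => ?_
    have hcm : coact' (f m) = LinearMap.rTensor H f (coact m) := LinearMap.congr_fun hc m
    simp only [LinearMap.comp_apply, LinearMap.lTensor_tmul, tauOfCoact_tmul, hcm]
    rw [← LinearMap.comp_apply, LinearMap.lTensor_comp_rTensor,
      ← LinearMap.rTensor_comp_lTensor, LinearMap.comp_apply]
  · intro hτ
    ext m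
    simpa [tauOfCoact_lmul_one_tmul] using
      LinearMap.congr_fun (hτ H (Algebra.lmul k H)) ((1 : H) ⊗ₜ[k] m)

lemma unitFam_tauOfCoact_iff :
    Qh.UnitFam (fun V _ _ ρV => Qh.tauOfCoact coact V ρV) ↔ Qh.CounitI coact := by
  refine forall_congr' fun m => ?_
  rw [tauOfCoact_tmul, QuasiBialgebra.trivRep_toLinearMap_flip_one,
    ← (TensorProduct.rid k M).injective.eq_iff, TensorProduct.rid_tmul, one_smul]

lemma linEquivariant_tauOfCoact (hC : Qh.CompatI ρM coact)
    {V : Type} [AddCommGroup V] [Module k V] (ρV : H →ₐ[k] Module.End k V) :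
    LinEquivariant (Qh.tAct (Qh.hashRep ρV).toLinearMap ρM.toLinearMap)
      (Qh.tAct ρM.toLinearMap ρV.toLinearMap) (Qh.tauOfCoact coact V ρV) := by
  intro h x
  obtain ⟨s, hs⟩ := TensorProduct.exists_finset (Qh.comul h)
  rw [Qh.tAct_eq_sum _ _ hs, Qh.tAct_eq_sum _ _ hs]
  suffices (Qh.tauOfCoact coact V ρV).comp
      (∑ i ∈ s, TensorProduct.map ((Qh.hashRep ρV).toLinearMap i.1) (ρM.toLinearMap i.2))
      = (∑ i ∈ s, TensorProduct.map (ρM.toLinearMap i.1) (ρV.toLinearMap i.2)).comp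
          (Qh.tauOfCoact coact V ρV) from LinearMap.congr_fun this x
  refine TensorProduct.ext' fun v m => ?_
  simp only [LinearMap.comp_apply, LinearMap.sum_apply, map_sum, TensorProduct.map_tmul,
    AlgHom.toLinearMap_apply, tauOfCoact_tmul, hashRep_apply]
  calc ∑ i ∈ s, LinearMap.lTensor M (ρV.toLinearMap.flip (ρV (Qh.S (Qh.S i.1)) v))
          (coact (ρM i.2 m))
      = LinearMap.lTensor M (ρV.toLinearMap.flip v) (∑ i ∈ s,
          LinearMap.lTensor M (LinearMap.mulRight k (Qh.S (Qh.S i.1))) (coact (ρM i.2 m))) := by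
        rw [map_sum]
        refine Finset.sum_congr rfl fun i _ => ?_
        rw [← AlgHom.toLinearMap_flip_comp_mulRight, LinearMap.lTensor_comp, LinearMap.comp_apply]
    _ = LinearMap.lTensor M (ρV.toLinearMap.flip v)
          (∑ i ∈ s, TensorProduct.map (ρM i.1) (LinearMap.mulLeft k i.2) (coact m)) := by
        rw [hC h m (H × H) s Prod.fst Prod.snd hs]
    _ = ∑ i ∈ s, TensorProduct.map (ρM i.1 : M →ₗ[k] M) (ρV i.2 : V →ₗ[k] V)
          (LinearMap.lTensor M (ρV.toLinearMap.flip v) (coact m)) := by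
        rw [map_sum]
        refine Finset.sum_congr rfl fun i _ => ?_
        rw [← LinearMap.comp_apply, ← LinearMap.comp_apply, LinearMap.lTensor_comp_map,
          AlgHom.toLinearMap_flip_comp_mulLeft, ← LinearMap.map_comp_lTensor]
        rfl

lemma compatI_of_linEquivariant_tauOfCoact
    (hτ : LinEquivariant (Qh.tAct (Qh.hashRep (Algebra.lmul k H)).toLinearMap ρM.toLinearMap)
      (Qh.tAct ρM.toLinearMap (Algebra.lmul k H).toLinearMap)
      (Qh.tauOfCoact coact H (Algebra.lmul k H))) :
    Qh.CompatI ρM coact := by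
  intro h m ι s h1 h2 hd
  have := hτ h ((1 : H) ⊗ₜ[k] m)
  rw [Qh.tAct_eq_sum _ _ hd, Qh.tAct_eq_sum _ _ hd] at this
  simp only [LinearMap.sum_apply, map_sum, TensorProduct.map_tmul, AlgHom.toLinearMap_apply,
    hashRep_apply, tauOfCoact_tmul, Algebra.lmul_toLinearMap_flip, Algebra.coe_lmul_eq_mul,
    LinearMap.mul_apply', mul_one, LinearMap.mulRight_one, LinearMap.lTensor_id,
    LinearMap.id_apply] at this
  exact this.symm

lemma isCentralFam_tauOfCoact_iff :
    Qh.IsCentralFam ρM (fun V _ _ ρV => Qh.tauOfCoact coact V ρV) ↔ Qh.CompatI ρM coact :=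
  ⟨fun hτ => Qh.compatI_of_linEquivariant_tauOfCoact ρM coact (hτ.1 H _),
    fun hC => ⟨fun _ _ _ ρV => Qh.linEquivariant_tauOfCoact ρM coact hC ρV,
      fun _ _ _ ρV _ _ _ ρW _ hf => Qh.tauOfCoact_comp_rTensor coact ρV ρW hf⟩⟩

section Hexagon

variable {V : Type} [AddCommGroup V] [Module k V] (ρV : H →ₐ[k] Module.End k V)
  {W : Type} [AddCommGroup W] [Module k W] (ρW : H →ₐ[k] Module.End k W)

/- Term by term, the two sides of the hexagon at `v ⊗ (w ⊗ m)` are the images of the two sides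
of `QuasiComodI` at `m` under `m ⊗ (x ⊗ y) ↦ (m ⊗ x v) ⊗ y w`. -/
lemma hexagon_lhs_tauOfCoact_tmul (p q r : H) (v : V) (w : W) (m : M) :
    (LinearMap.rTensor W (Qh.tauOfCoact coact V ρV))
      ((TensorProduct.map (TensorProduct.map ((Qh.hashRep ρV) p : V →ₗ[k] V)
          (ρM q : M →ₗ[k] M)) (ρW r : W →ₗ[k] W))
        ((TensorProduct.assoc k V M W).symm
          ((LinearMap.lTensor V (Qh.tauOfCoact coact W ρW)) (v ⊗ₜ[k] (w ⊗ₜ[k] m)))))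
    = (TensorProduct.assoc k M V W).symm
        ((LinearMap.lTensor M (TensorProduct.map (ρV.toLinearMap.flip v) (ρW.toLinearMap.flip w)))
          ((TensorProduct.assoc k M H H)
            ((TensorProduct.map
              ((LinearMap.lTensor M (LinearMap.mulRight k (Qh.S (Qh.S p)))).comp
                (coact.comp (ρM q : M →ₗ[k] M)))
              (LinearMap.mulLeft k r)) (coact m)))) := by
  rw [LinearMap.lTensor_tmul, tauOfCoact_tmul]
  generalize coact m = x
  induction x using TensorProduct.induction_on with
  | zero => simp
  | add a b ha hb => simp only [map_add, TensorProduct.tmul_add, ha, hb]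
  | tmul m' h =>
    simp only [LinearMap.lTensor_tmul, TensorProduct.assoc_symm_tmul, TensorProduct.map_tmul,
      LinearMap.rTensor_tmul, tauOfCoact_tmul, LinearMap.comp_apply, hashRep_apply,
      LinearMap.flip_apply, LinearMap.mulLeft_apply]
    generalize coact ((ρM q) m') = y
    induction y using TensorProduct.induction_on with
    | zero => simp
    | add a b ha hb => simp only [map_add, TensorProduct.add_tmul, ha, hb]
    | tmul n c =>
      simp only [LinearMap.lTensor_tmul, TensorProduct.map_tmul, TensorProduct.assoc_tmul,
        TensorProduct.assoc_symm_tmul, LinearMap.flip_apply, LinearMap.mulRight_apply,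
        AlgHom.toLinearMap_apply, map_mul, Module.End.mul_apply]

lemma hexagon_rhs_tauOfCoact_tmul (p q r p' q' r' : H) (v : V) (w : W) (m : M) :
    (TensorProduct.map (TensorProduct.map (ρM p : M →ₗ[k] M) (ρV q : V →ₗ[k] V))
        (ρW r : W →ₗ[k] W))
      ((TensorProduct.assoc k M V W).symm
        (Qh.tauOfCoact coact (V ⊗[k] W) (Qh.tRep ρV ρW)
          ((TensorProduct.map (TensorProduct.map ((Qh.hashRep ρV) p' : V →ₗ[k] V)
              ((Qh.hashRep ρW) q' : W →ₗ[k] W)) (ρM r' : M →ₗ[k] M))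
            ((TensorProduct.assoc k V W M).symm (v ⊗ₜ[k] (w ⊗ₜ[k] m))))))
    = (TensorProduct.assoc k M V W).symm
        ((LinearMap.lTensor M (TensorProduct.map (ρV.toLinearMap.flip v) (ρW.toLinearMap.flip w)))
          ((TensorProduct.map (ρM p : M →ₗ[k] M)
            (TensorProduct.map
              ((LinearMap.mulLeft k q).comp (LinearMap.mulRight k (Qh.S (Qh.S p'))))
              ((LinearMap.mulLeft k r).comp (LinearMap.mulRight k (Qh.S (Qh.S q'))))))
            ((LinearMap.lTensor M Qh.comul.toLinearMap) (coact (ρM r' m))))) := by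
  rw [TensorProduct.assoc_symm_tmul, TensorProduct.map_tmul, TensorProduct.map_tmul,
    tauOfCoact_tmul]
  generalize coact ((ρM r') m) = y
  induction y using TensorProduct.induction_on with
  | zero => simp
  | add a b ha hb => simp only [map_add, ha, hb]
  | tmul n c =>
    simp only [LinearMap.lTensor_tmul, TensorProduct.map_tmul, LinearMap.flip_apply,
      AlgHom.toLinearMap_apply, QuasiBialgebra.tRep_apply]
    generalize Qh.comul c = z
    induction z using TensorProduct.induction_on with
    | zero => simp
    | add a b ha hb => simp only [map_add, LinearMap.add_apply, TensorProduct.tmul_add, ha, hb]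
    | tmul c1 c2 =>
      simp only [LinearMap.comp_apply, AlgHom.toLinearMap_apply, Algebra.TensorProduct.map_tmul,
        Module.endTensorEndAlgHom_apply, TensorProduct.AlgebraTensorModule.map_tmul,
        TensorProduct.map_tmul, TensorProduct.assoc_symm_tmul, LinearMap.flip_apply,
        hashRep_apply, LinearMap.mulLeft_apply, LinearMap.mulRight_apply,
        map_mul, Module.End.mul_apply]

lemma hexagonFam_tauOfCoact_iff :
    Qh.HexagonFam ρM (fun V _ _ ρV => Qh.tauOfCoact coact V ρV)
      ↔ Qh.QuasiComodI ρM coact := by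
  constructor
  · intro hHex m ι s P Q R hs
    have := LinearMap.congr_fun (hHex H (Algebra.lmul k H) H (Algebra.lmul k H) ι s P Q R hs)
      ((1 : H) ⊗ₜ[k] ((1 : H) ⊗ₜ[k] m))
    simp only [LinearMap.comp_apply, LinearMap.sum_apply, map_sum, LinearEquiv.coe_coe,
      hexagon_lhs_tauOfCoact_tmul, hexagon_rhs_tauOfCoact_tmul, Algebra.lmul_toLinearMap_flip,
      LinearMap.mulRight_one, TensorProduct.map_id, LinearMap.lTensor_id, LinearMap.id_apply,
      LinearEquiv.symm_apply_apply] at this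
    rw [← map_sum, this, map_sum]
    simp only [map_sum, LinearEquiv.apply_symm_apply]
    exact Finset.sum_comm
  · intro hQC V _ _ ρV W _ _ ρW ι s P Q R hs
    refine TensorProduct.ext' fun v z => ?_
    induction z using TensorProduct.induction_on with
    | zero => simp
    | add a b ha hb => simp only [TensorProduct.tmul_add, map_add, ha, hb]
    | tmul w m =>
      simp only [LinearMap.comp_apply, LinearMap.sum_apply, map_sum, LinearEquiv.coe_coe,
        hexagon_lhs_tauOfCoact_tmul, hexagon_rhs_tauOfCoact_tmul]
      rw [← map_sum, ← map_sum, hQC m ι s P Q R hs]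
      simp only [map_sum]
      exact Finset.sum_comm

end Hexagon

end QuasiHopf

/-- The category of type I left-right anti-Yetter–Drinfeld
modules over a quasi-Hopf algebra `H` is equivalent to the weak center of the
bimodule category `^#_H M`: the data correspond bijectively, and a module map
is a morphism of aYD modules if and only if it is a morphism of weak center
objects. -/
theorem typeI_aYD_equiv_weak_center
    (Qh : QuasiHopf k H) :
    (∀ (M : Type) [AddCommGroup M] [Module k M]
      (ρM : H →ₐ[k] Module.End k M)
      (τ : ∀ (V : Type) [AddCommGroup V] [Module k V],
        (H →ₐ[k] Module.End k V) → (V ⊗[k] M →ₗ[k] M ⊗[k] V)),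
      Qh.IsCentralFam ρM τ → Qh.HexagonFam ρM τ → Qh.UnitFam τ →
        (Qh.CompatI ρM (Qh.coactOfTau τ) ∧
         Qh.QuasiComodI ρM (Qh.coactOfTau τ) ∧
         Qh.CounitI (Qh.coactOfTau τ)) ∧
        ∀ (V : Type) [AddCommGroup V] [Module k V]
          (ρV : H →ₐ[k] Module.End k V),
          τ V ρV = Qh.tauOfCoact (Qh.coactOfTau τ) V ρV) ∧
    (∀ (M : Type) [AddCommGroup M] [Module k M]
      (ρM : H →ₐ[k] Module.End k M) (coact : M →ₗ[k] M ⊗[k] H),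
      Qh.CompatI ρM coact → Qh.QuasiComodI ρM coact → Qh.CounitI coact →
        Qh.IsCentralFam ρM (fun V _ _ ρV => Qh.tauOfCoact coact V ρV) ∧
        Qh.HexagonFam ρM (fun V _ _ ρV => Qh.tauOfCoact coact V ρV) ∧
        Qh.UnitFam (fun V _ _ ρV => Qh.tauOfCoact coact V ρV) ∧
        Qh.coactOfTau (fun V _ _ ρV => Qh.tauOfCoact coact V ρV) = coact) ∧
    (∀ (M : Type) [AddCommGroup M] [Module k M]
      (ρM : H →ₐ[k] Module.End k M) (coact : M →ₗ[k] M ⊗[k] H)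
      (M' : Type) [AddCommGroup M'] [Module k M']
      (ρM' : H →ₐ[k] Module.End k M') (coact' : M' →ₗ[k] M' ⊗[k] H),
      (Qh.CompatI ρM coact ∧ Qh.QuasiComodI ρM coact ∧ Qh.CounitI coact) →
      (Qh.CompatI ρM' coact' ∧ Qh.QuasiComodI ρM' coact' ∧
        Qh.CounitI coact') →
      ∀ f : M →ₗ[k] M',
        LinEquivariant ρM.toLinearMap ρM'.toLinearMap f →
        ((coact'.comp f = (LinearMap.rTensor H f).comp coact) ↔
          (∀ (V : Type) [AddCommGroup V] [Module k V]
            (ρV : H →ₐ[k] Module.End k V),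
            (Qh.tauOfCoact coact' V ρV).comp (LinearMap.lTensor V f)
              = (LinearMap.rTensor V f).comp
                  (Qh.tauOfCoact coact V ρV)))) := by
  refine ⟨fun M _ _ ρM τ hCF hHex hUnit => ?_, fun M _ _ ρM coact hC hQC hU => ?_,
    fun M _ _ _ coact M' _ _ _ coact' _ _ f _ =>
      Qh.coact_comp_eq_iff_tauOfCoact_comp_eq coact coact' f⟩
  · have htau := Qh.eq_tauOfCoact_coactOfTau τ hCF.2
    have hτ : τ = fun (V : Type) [AddCommGroup V] [Module k V] ρV =>
        Qh.tauOfCoact (Qh.coactOfTau τ) V ρV := by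
      funext V _ _ ρV
      exact htau V ρV
    rw [hτ] at hCF hHex hUnit
    exact ⟨⟨(Qh.isCentralFam_tauOfCoact_iff ρM _).1 hCF,
      (Qh.hexagonFam_tauOfCoact_iff ρM _).1 hHex, (Qh.unitFam_tauOfCoact_iff _).1 hUnit⟩, htau⟩
  · exact ⟨(Qh.isCentralFam_tauOfCoact_iff ρM coact).2 hC,
      (Qh.hexagonFam_tauOfCoact_iff ρM coact).2 hQC, (Qh.unitFam_tauOfCoact_iff coact).2 hU,
      Qh.coactOfTau_tauOfCoact coact⟩
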